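/- Let λ>1 and φ∈ℝ, let v₀∈L³_w(ℝ³;ℝ³) be RDSS with factor λ and phase φ, i.e. v₀(x)=λ R(−φ) v₀(λ R(φ) x) for a.e. x∈ℝ³, and let q∈(3,∞). Then the function x ↦ sup_{1≤t≤λ²} |(e^{tΔ}v₀)(x)| belongs to L^q(ℝ³), i.e. ∫_{ℝ³} ( sup_{1≤t≤λ²} |(e^{tΔ}v₀)(x)| )^q dx < ∞. -/

import Mathlib

/-!
For `1 ≤ t ≤ λ²` the heat kernel is dominated by the single Gaussian
`(4π)^{-3/2} exp(-|z|²/(4λ²))`, so the supremum over `t` is bounded pointwise by a constant times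
the convolution of `|v₀|` with an integrable Gaussian. A weak-`L³` function splits as
`|v₀| 1_{|v₀| > 1} ∈ L¹` plus `|v₀| 1_{|v₀| ≤ 1} ∈ L^q` (layer-cake formula, using `q > 3`), and
Young's inequality against a Gaussian, which lies in `L¹ ∩ L^q`, puts both pieces of the
convolution in `L^q`.
-/

open MeasureTheory Set
open scoped ENNReal

noncomputable section

/-- ℝ³ realized as functions `Fin 3 → ℝ`. -/
abbrev V3 := Fin 3 → ℝ

/-- Rotation by angle `s` about the x₃-axis. -/
def rot (s : ℝ) : Matrix (Fin 3) (Fin 3) ℝ :=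
  !![Real.cos s, -Real.sin s, 0; Real.sin s, Real.cos s, 0; 0, 0, 1]

/-- Squared Euclidean norm on ℝ³. -/
def nsq (x : V3) : ℝ := ∑ i, (x i) ^ 2

/-- Euclidean norm on ℝ³. -/
def en (x : V3) : ℝ := Real.sqrt (nsq x)

/-- Membership in weak L³(ℝ³). -/
def MemWeakL3 (f : V3 → V3) : Prop :=
  ∃ C : ℝ, ∀ σ : ℝ, 0 < σ →
    volume {x : V3 | σ < en (f x)} ≤ ENNReal.ofReal (C / σ ^ 3)

/-- Caloric extension `e^{tΔ}v₀` of `v₀`. -/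
def heat (v₀ : V3 → V3) (t : ℝ) (x : V3) : V3 :=
  fun i => ∫ y : V3, (4 * Real.pi * t) ^ (-(3 : ℝ) / 2) *
    Real.exp (-(nsq (x - y)) / (4 * t)) * v₀ y i

section WeightedHolder

variable {α : Type*} [MeasurableSpace α] {μ : Measure α}

/-- Jensen's inequality for `t ↦ t ^ q` with respect to the measure `g • μ`. -/
theorem rpow_lintegral_mul_le {f g : α → ℝ≥0∞} (hf : AEMeasurable f μ) (hg : AEMeasurable g μ)
    {q : ℝ} (hq : 1 ≤ q) :
    (∫⁻ a, f a * g a ∂μ) ^ q ≤ (∫⁻ a, g a ∂μ) ^ (q - 1) * ∫⁻ a, f a ^ q * g a ∂μ := by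
  have hq0 : 0 < q := by linarith
  have hinv : 0 ≤ 1 - 1 / q := sub_nonneg.2 ((div_le_one hq0).2 hq)
  have holder := ENNReal.lintegral_mul_norm_pow_le (f := fun a => f a ^ q * g a)
    ((hf.pow_const q).mul hg) hg (one_div_nonneg.2 hq0.le) hinv (add_sub_cancel _ _)
  have hfg : ∀ a, (f a ^ q * g a) ^ (1 / q) * g a ^ (1 - 1 / q) = f a * g a := fun a => by
    rw [ENNReal.mul_rpow_of_nonneg _ _ (by positivity), ← ENNReal.rpow_mul,
      mul_one_div_cancel hq0.ne', ENNReal.rpow_one, mul_assoc,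
      ← ENNReal.rpow_add_of_nonneg _ _ (by positivity) hinv, add_sub_cancel, ENNReal.rpow_one]
  rw [lintegral_congr hfg] at holder
  calc (∫⁻ a, f a * g a ∂μ) ^ q
      ≤ ((∫⁻ a, f a ^ q * g a ∂μ) ^ (1 / q) * (∫⁻ a, g a ∂μ) ^ (1 - 1 / q)) ^ q :=
        ENNReal.rpow_le_rpow holder hq0.le
    _ = (∫⁻ a, g a ∂μ) ^ (q - 1) * ∫⁻ a, f a ^ q * g a ∂μ := by
        rw [ENNReal.mul_rpow_of_nonneg _ _ hq0.le, ← ENNReal.rpow_mul, ← ENNReal.rpow_mul,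
          one_div_mul_cancel hq0.ne', ENNReal.rpow_one, mul_comm, sub_mul,
          one_div_mul_cancel hq0.ne', one_mul]

end WeightedHolder

section Young

variable {G : Type*} [MeasurableSpace G] [AddGroup G] [MeasurableAdd₂ G] [MeasurableNeg G]
  {μ : Measure G} [SFinite μ] [μ.IsAddLeftInvariant]

theorem lintegral_lconvolution_rpow_le {f g : G → ℝ≥0∞} (hf : Measurable f) (hg : Measurable g)
    {q : ℝ} (hq : 1 ≤ q) :
    ∫⁻ x, (f ⋆ₗ[μ] g) x ^ q ∂μ ≤ (∫⁻ y, f y ∂μ) ^ q * ∫⁻ z, g z ^ q ∂μ := by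
  have hshift : ∀ y, ∫⁻ x, g (-y + x) ^ q ∂μ = ∫⁻ z, g z ^ q ∂μ := fun y =>
    lintegral_add_left_eq_self (fun z => g z ^ q) (-y)
  calc ∫⁻ x, (f ⋆ₗ[μ] g) x ^ q ∂μ
      ≤ ∫⁻ x, (∫⁻ y, f y ∂μ) ^ (q - 1) * ∫⁻ y, g (-y + x) ^ q * f y ∂μ ∂μ := by
        refine lintegral_mono fun x => ?_
        simpa only [lconvolution_def, mul_comm (f _)] using
          rpow_lintegral_mul_le (μ := μ) (by fun_prop) hf.aemeasurable hq
    _ = (∫⁻ y, f y ∂μ) ^ (q - 1) * ∫⁻ y, (∫⁻ z, g z ^ q ∂μ) * f y ∂μ := by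
        rw [lintegral_const_mul _ (by fun_prop), lintegral_lintegral_swap (by fun_prop)]
        congr 1
        refine lintegral_congr fun y => ?_
        rw [lintegral_mul_const _ (by fun_prop), hshift]
    _ = (∫⁻ y, f y ∂μ) ^ q * ∫⁻ z, g z ^ q ∂μ := by
        have hpow : (∫⁻ y, f y ∂μ) ^ q = (∫⁻ y, f y ∂μ) ^ (q - 1) * ∫⁻ y, f y ∂μ := by
          simpa using ENNReal.rpow_add_of_nonneg (x := ∫⁻ y, f y ∂μ) (q - 1) 1 (by linarith)
            zero_le_one
        rw [lintegral_const_mul _ hf, hpow]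
        ring

end Young

theorem mem_and_lt_of_lt_indicator {α : Type*} {s : Set α} {w : α → ℝ} {t : ℝ} (ht : 0 ≤ t) {x : α}
    (hx : t < s.indicator w x) : x ∈ s ∧ t < w x := by
  by_cases hxs : x ∈ s
  · exact ⟨hxs, by rwa [indicator_of_mem hxs] at hx⟩
  · rw [indicator_of_notMem hxs] at hx
    exact absurd hx (not_lt.2 ht)

section WeakLp

variable {α : Type*} [MeasurableSpace α] {μ : Measure α}

theorem lintegral_indicator_one_lt_lt_top {w : α → ℝ} (hw : Measurable w) {p C : ℝ}
    (hp : 1 < p) (hweak : ∀ σ > 0, μ {x | σ < w x} ≤ ENNReal.ofReal (C / σ ^ p)) :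
    ∫⁻ x, ENNReal.ofReal ({x | 1 < w x}.indicator w x) ∂μ < ⊤ := by
  have hs : MeasurableSet {x | 1 < w x} := measurableSet_lt measurable_const hw
  have hf_nn : ∀ x, 0 ≤ {x | 1 < w x}.indicator w x :=
    fun x => indicator_nonneg (fun x (hx : 1 < w x) => by linarith) x
  rw [lintegral_eq_lintegral_meas_lt μ (ae_of_all _ hf_nn) ((hw.indicator hs).aemeasurable),
    ← Ioc_union_Ioi_eq_Ioi zero_le_one, lintegral_union measurableSet_Ioi (Ioc_disjoint_Ioi le_rfl)]
  refine ENNReal.add_lt_top.2 ⟨?_, ?_⟩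
  · calc ∫⁻ t in Ioc 0 1, μ {x | t < {x | 1 < w x}.indicator w x}
        ≤ ∫⁻ t in Ioc 0 1, μ {x | 1 < w x} :=
          setLIntegral_mono' measurableSet_Ioc fun t ht =>
            measure_mono fun x hx => (mem_and_lt_of_lt_indicator ht.1.le hx).1
      _ = μ {x | 1 < w x} * volume (Ioc (0 : ℝ) 1) := setLIntegral_const _ _
      _ < ⊤ := ENNReal.mul_lt_top ((hweak 1 one_pos).trans_lt ENNReal.ofReal_lt_top)
          (by simp)
  · calc ∫⁻ t in Ioi 1, μ {x | t < {x | 1 < w x}.indicator w x}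
        ≤ ∫⁻ t in Ioi 1, ENNReal.ofReal (C * t ^ (-p)) :=
          setLIntegral_mono' measurableSet_Ioi fun t (ht : 1 < t) => by
            have ht0 : 0 < t := by linarith
            calc μ {x | t < {x | 1 < w x}.indicator w x}
                ≤ μ {x | t < w x} :=
                  measure_mono fun x hx => (mem_and_lt_of_lt_indicator ht0.le hx).2
              _ ≤ ENNReal.ofReal (C * t ^ (-p)) := by
                  rw [Real.rpow_neg ht0.le, ← div_eq_mul_inv]; exact hweak t ht0
      _ < ⊤ := ((integrableOn_Ioi_rpow_of_lt (by linarith) one_pos).const_mul C).lintegral_lt_top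

theorem lintegral_indicator_le_one_rpow_lt_top {w : α → ℝ} (hw : Measurable w) (hw0 : 0 ≤ w)
    {p q C : ℝ} (hpq : p < q) (hq : 0 < q)
    (hweak : ∀ σ > 0, μ {x | σ < w x} ≤ ENNReal.ofReal (C / σ ^ p)) :
    ∫⁻ x, ENNReal.ofReal ({x | w x ≤ 1}.indicator w x ^ q) ∂μ < ⊤ := by
  have hs : MeasurableSet {x | w x ≤ 1} := measurableSet_le hw measurable_const
  have hf_nn : ∀ x, 0 ≤ {x | w x ≤ 1}.indicator w x :=
    fun x => indicator_nonneg (fun x _ => hw0 x) x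
  rw [lintegral_rpow_eq_lintegral_meas_lt_mul μ (ae_of_all _ hf_nn)
      ((hw.indicator hs).aemeasurable) hq,
    ← Ioc_union_Ioi_eq_Ioi zero_le_one, lintegral_union measurableSet_Ioi (Ioc_disjoint_Ioi le_rfl)]
  have htail : ∀ t ∈ Ioi (1 : ℝ), μ {x | t < {x | w x ≤ 1}.indicator w x} = 0 := fun t ht => by
    refine measure_mono_null (fun x hx => ?_) measure_empty
    obtain ⟨hx1, hxt⟩ := mem_and_lt_of_lt_indicator (zero_le_one.trans ht.out.le) hx
    exact absurd (hxt.trans_le hx1) (not_lt.2 (le_of_lt ht))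
  rw [setLIntegral_congr_fun measurableSet_Ioi fun t ht => by rw [htail t ht, zero_mul],
    lintegral_zero, add_zero]
  refine ENNReal.mul_lt_top ENNReal.ofReal_lt_top ?_
  calc ∫⁻ t in Ioc 0 1, μ {x | t < {x | w x ≤ 1}.indicator w x} * ENNReal.ofReal (t ^ (q - 1))
      ≤ ∫⁻ t in Ioc 0 1, ENNReal.ofReal (C * t ^ (q - 1 - p)) :=
        setLIntegral_mono' measurableSet_Ioc fun t ht => by
          have hdist : μ {x | t < {x | w x ≤ 1}.indicator w x} ≤ ENNReal.ofReal (C / t ^ p) :=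
            (measure_mono fun x hx => (mem_and_lt_of_lt_indicator ht.1.le hx).2).trans
              (hweak t ht.1)
          calc μ {x | t < {x | w x ≤ 1}.indicator w x} * ENNReal.ofReal (t ^ (q - 1))
              ≤ ENNReal.ofReal (C / t ^ p) * ENNReal.ofReal (t ^ (q - 1)) := by gcongr
            _ = ENNReal.ofReal (C * t ^ (q - 1 - p)) := by
                rw [← ENNReal.ofReal_mul' (Real.rpow_nonneg ht.1.le _),
                  Real.rpow_sub ht.1 (q - 1) p]
                ring_nf
    _ < ⊤ := ((intervalIntegral.intervalIntegrable_rpow' (by linarith)).1.const_mul C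
        ).lintegral_lt_top

end WeakLp

section WeakYoung

variable {G : Type*} [MeasurableSpace G] [AddCommGroup G] [MeasurableAdd₂ G] [MeasurableNeg G]
  {μ : Measure G} [SFinite μ] [μ.IsAddLeftInvariant] [μ.IsNegInvariant]

theorem lintegral_lconvolution_rpow_lt_top_of_weakLp {K : G → ℝ≥0∞} (hK : Measurable K)
    {q : ℝ} (hK1 : ∫⁻ z, K z ∂μ < ⊤) (hKq : ∫⁻ z, K z ^ q ∂μ < ⊤)
    {w : G → ℝ} (hw : Measurable w) (hw0 : 0 ≤ w) {p C : ℝ} (hp : 1 < p) (hpq : p < q)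
    (hweak : ∀ σ > 0, μ {x | σ < w x} ≤ ENNReal.ofReal (C / σ ^ p)) :
    ∫⁻ x, ((fun y => ENNReal.ofReal (w y)) ⋆ₗ[μ] K) x ^ q ∂μ < ⊤ := by
  have hq : 1 ≤ q := by linarith
  have htwo : (2 : ℝ≥0∞) ^ (q - 1) < ⊤ :=
    ENNReal.rpow_lt_top_of_nonneg (by linarith) ENNReal.ofNat_ne_top
  set W₁ : G → ℝ≥0∞ := fun y => ENNReal.ofReal ({x | 1 < w x}.indicator w y)
  set W₂ : G → ℝ≥0∞ := fun y => ENNReal.ofReal ({x | w x ≤ 1}.indicator w y)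
  have hW₁ : Measurable W₁ :=
    (hw.indicator (measurableSet_lt measurable_const hw)).ennreal_ofReal
  have hW₂ : Measurable W₂ :=
    (hw.indicator (measurableSet_le hw measurable_const)).ennreal_ofReal
  have hsplit : ∀ x, ((fun y => ENNReal.ofReal (w y)) ⋆ₗ[μ] K) x
      = (W₁ ⋆ₗ[μ] K) x + (W₂ ⋆ₗ[μ] K) x := fun x => by
    simp only [lconvolution_def]
    rw [← lintegral_add_left (by fun_prop)]
    refine lintegral_congr fun y => ?_
    rw [← add_mul]
    congr 1
    by_cases hy : 1 < w y
    · simp [W₁, W₂, hy, not_le.2 hy]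
    · simp [W₁, W₂, hy, not_lt.1 hy]
  have hfin₁ : ∫⁻ x, (W₁ ⋆ₗ[μ] K) x ^ q ∂μ < ⊤ :=
    (lintegral_lconvolution_rpow_le hW₁ hK hq).trans_lt <| ENNReal.mul_lt_top
      (ENNReal.rpow_lt_top_of_nonneg (by linarith)
        (lintegral_indicator_one_lt_lt_top hw hp hweak).ne) hKq
  have hfin₂ : ∫⁻ x, (W₂ ⋆ₗ[μ] K) x ^ q ∂μ < ⊤ := by
    rw [lconvolution_comm]
    refine (lintegral_lconvolution_rpow_le hK hW₂ hq).trans_lt <| ENNReal.mul_lt_top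
      (ENNReal.rpow_lt_top_of_nonneg (by linarith) hK1.ne) ?_
    simp_rw [W₂, ENNReal.ofReal_rpow_of_nonneg (indicator_nonneg (fun x _ => hw0 x) _)
      (by linarith : 0 ≤ q)]
    exact lintegral_indicator_le_one_rpow_lt_top hw hw0 hpq (by linarith) hweak
  calc ∫⁻ x, ((fun y => ENNReal.ofReal (w y)) ⋆ₗ[μ] K) x ^ q ∂μ
      ≤ ∫⁻ x, 2 ^ (q - 1) * ((W₁ ⋆ₗ[μ] K) x ^ q + (W₂ ⋆ₗ[μ] K) x ^ q) ∂μ :=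
        lintegral_mono fun x => (hsplit x).symm ▸ ENNReal.rpow_add_le_mul_rpow_add_rpow _ _ hq
    _ = 2 ^ (q - 1) * (∫⁻ x, (W₁ ⋆ₗ[μ] K) x ^ q ∂μ + ∫⁻ x, (W₂ ⋆ₗ[μ] K) x ^ q ∂μ) := by
        rw [lintegral_const_mul' _ _ htwo.ne, lintegral_add_left (by fun_prop)]
    _ < ⊤ := ENNReal.mul_lt_top htwo (ENNReal.add_lt_top.2 ⟨hfin₁, hfin₂⟩)

end WeakYoung

section HeatKernel

open Real

theorem nsq_nonneg (x : V3) : 0 ≤ nsq x := Finset.sum_nonneg fun _ _ => sq_nonneg _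

theorem measurable_nsq : Measurable nsq := by
  unfold nsq
  fun_prop

theorem measurable_en : Measurable en := measurable_nsq.sqrt

theorem en_nonneg (x : V3) : 0 ≤ en x := sqrt_nonneg _

theorem abs_le_en (u : V3) (i : Fin 3) : |u i| ≤ en u :=
  abs_le_sqrt (Finset.single_le_sum (f := fun j => u j ^ 2) (fun _ _ => sq_nonneg _)
    (Finset.mem_univ i))

theorem en_le_sum_abs (u : V3) : en u ≤ ∑ i, |u i| := by
  refine sqrt_le_iff.2 ⟨by positivity, ?_⟩
  simpa [nsq, sq_abs] using Finset.sum_sq_le_sq_sum_of_nonneg (s := Finset.univ)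
    (fun i _ => abs_nonneg (u i))

def gaussian (a : ℝ) (z : V3) : ℝ≥0∞ := ENNReal.ofReal (exp (-(a * nsq z)))

theorem measurable_gaussian (a : ℝ) : Measurable (gaussian a) :=
  (measurable_exp.comp (measurable_nsq.const_mul a).neg).ennreal_ofReal

theorem lintegral_gaussian_rpow_lt_top {a r : ℝ} (ha : 0 < a) (hr : 0 < r) :
    ∫⁻ z, gaussian a z ^ r < ⊤ := by
  have hprod : Integrable (fun z : V3 => ∏ i, exp (-(a * r) * z i ^ 2)) :=
    Integrable.fintype_prod fun _ => integrable_exp_neg_mul_sq (by positivity)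
  refine (lintegral_congr fun z => ?_).trans_lt hprod.lintegral_lt_top
  rw [gaussian, ENNReal.ofReal_rpow_of_nonneg (exp_pos _).le hr.le, ← exp_mul, ← exp_sum]
  congr 2
  rw [nsq, Finset.mul_sum, ← Finset.sum_neg_distrib, Finset.sum_mul]
  exact Finset.sum_congr rfl fun i _ => by ring

theorem heatKernel_le {t T : ℝ} (ht : t ∈ Icc 1 T) (z : V3) :
    (4 * π * t) ^ (-(3 : ℝ) / 2) * exp (-(nsq z) / (4 * t)) ≤
      (4 * π) ^ (-(3 : ℝ) / 2) * exp (-((4 * T)⁻¹ * nsq z)) := by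
  obtain ⟨h1t, htT⟩ := ht
  have hπ : 0 < 4 * π := by positivity
  refine mul_le_mul ?_ ?_ (exp_pos _).le (by positivity)
  · exact rpow_le_rpow_of_nonpos hπ (le_mul_of_one_le_right hπ.le h1t) (by norm_num)
  · rw [exp_le_exp, neg_div, neg_le_neg_iff, inv_mul_eq_div]
    exact div_le_div_of_nonneg_left (nsq_nonneg z) (by positivity) (by linarith)

theorem ofReal_en_heat_le (v₀ : V3 → V3) {t T : ℝ} (ht : t ∈ Icc 1 T) (x : V3) :
    ENNReal.ofReal (en (heat v₀ t x)) ≤ 3 * ENNReal.ofReal ((4 * π) ^ (-(3 : ℝ) / 2)) *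
      ((fun y => ENNReal.ofReal (en (v₀ y))) ⋆ₗ gaussian (4 * T)⁻¹) x := by
  set c := (4 * π) ^ (-(3 : ℝ) / 2)
  have hkernel : 0 ≤ 4 * π * t := by nlinarith [pi_pos, ht.1]
  have hcomp : ∀ i, ‖heat v₀ t x i‖ₑ ≤
      ENNReal.ofReal c * ((fun y => ENNReal.ofReal (en (v₀ y))) ⋆ₗ gaussian (4 * T)⁻¹) x :=
    fun i => by
    refine (enorm_integral_le_lintegral_enorm _).trans ?_
    rw [lconvolution_def, ← lintegral_const_mul' _ _ ENNReal.ofReal_ne_top]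
    refine lintegral_mono fun y => ?_
    rw [Real.enorm_eq_ofReal_abs, gaussian, neg_add_eq_sub,
      ← ENNReal.ofReal_mul (en_nonneg _), ← ENNReal.ofReal_mul (by positivity)]
    refine ENNReal.ofReal_le_ofReal ?_
    rw [abs_mul, abs_of_nonneg (mul_nonneg (rpow_nonneg hkernel _) (exp_pos _).le)]
    calc (4 * π * t) ^ (-(3 : ℝ) / 2) * exp (-nsq (x - y) / (4 * t)) * |v₀ y i|
        ≤ (c * exp (-((4 * T)⁻¹ * nsq (x - y)))) * en (v₀ y) :=
          mul_le_mul (heatKernel_le ht _) (abs_le_en _ _) (abs_nonneg _) (by positivity)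
      _ = c * (en (v₀ y) * exp (-((4 * T)⁻¹ * nsq (x - y)))) := by ring
  calc ENNReal.ofReal (en (heat v₀ t x))
      ≤ ENNReal.ofReal (∑ i, |heat v₀ t x i|) := ENNReal.ofReal_le_ofReal (en_le_sum_abs _)
    _ = ∑ i, ‖heat v₀ t x i‖ₑ := by
        simp only [ENNReal.ofReal_sum_of_nonneg fun i _ => abs_nonneg _, Real.enorm_eq_ofReal_abs]
    _ ≤ ∑ _ : Fin 3, ENNReal.ofReal c *
          ((fun y => ENNReal.ofReal (en (v₀ y))) ⋆ₗ gaussian (4 * T)⁻¹) x :=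
        Finset.sum_le_sum fun i _ => hcomp i
    _ = _ := by simp [mul_assoc]

end HeatKernel

theorem rdss_heat_sup_Lq_general
    (lam : ℝ) (hlam : 1 < lam)
    (v₀ : V3 → V3) (hmeas : Measurable v₀)
    (hweakL3 : MemWeakL3 v₀)
    (q : ℝ) (hq : 3 < q) :
    ∫⁻ x : V3, (⨆ t ∈ Icc (1 : ℝ) (lam ^ 2),
      ENNReal.ofReal ((en (heat v₀ t x)) ^ q)) < ⊤ := by
  obtain ⟨C, hC⟩ := hweakL3
  have hq0 : 0 ≤ q := by linarith
  have ha : 0 < (4 * lam ^ 2)⁻¹ := by positivity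
  set K := 3 * ENNReal.ofReal ((4 * Real.pi) ^ (-(3 : ℝ) / 2))
  have hK : K ^ q < ⊤ := ENNReal.rpow_lt_top_of_nonneg hq0 (by simp [K, ENNReal.mul_eq_top])
  set v : V3 → ℝ≥0∞ := fun y => ENNReal.ofReal (en (v₀ y))
  have hconv : ∫⁻ x, (v ⋆ₗ gaussian (4 * lam ^ 2)⁻¹) x ^ q < ⊤ :=
    lintegral_lconvolution_rpow_lt_top_of_weakLp (measurable_gaussian _)
      (by simpa using lintegral_gaussian_rpow_lt_top ha one_pos)
      (lintegral_gaussian_rpow_lt_top ha (by linarith)) (measurable_en.comp hmeas)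
      (fun y => en_nonneg _) (p := 3) (by norm_num) hq (by simpa using hC)
  calc ∫⁻ x, ⨆ t ∈ Icc (1 : ℝ) (lam ^ 2), ENNReal.ofReal (en (heat v₀ t x) ^ q)
      ≤ ∫⁻ x, K ^ q * (v ⋆ₗ gaussian (4 * lam ^ 2)⁻¹) x ^ q :=
        lintegral_mono fun x => iSup₂_le fun t ht => by
          rw [← ENNReal.ofReal_rpow_of_nonneg (en_nonneg _) hq0,
            ← ENNReal.mul_rpow_of_nonneg _ _ hq0]
          exact ENNReal.rpow_le_rpow (ofReal_en_heat_le v₀ ht x) hq0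
    _ = K ^ q * ∫⁻ x, (v ⋆ₗ gaussian (4 * lam ^ 2)⁻¹) x ^ q := lintegral_const_mul' _ _ hK.ne
    _ < ⊤ := ENNReal.mul_lt_top hK hconv

/-- Corollary 3.5 for Ω = ℝ³: for RDSS data `v₀ ∈ L³_w` and q ∈ (3,∞), the function
`x ↦ sup_{1 ≤ t ≤ λ²} |e^{tΔ}v₀(x)|` belongs to L^q(ℝ³). -/
theorem rdss_heat_sup_Lq
    (lam φ : ℝ) (hlam : 1 < lam)
    (v₀ : V3 → V3) (hmeas : Measurable v₀)
    (hweakL3 : MemWeakL3 v₀)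
    (hrdss : ∀ᵐ x : V3 ∂volume,
      v₀ x = lam • (rot (-φ)).mulVec (v₀ (lam • (rot φ).mulVec x)))
    (q : ℝ) (hq : 3 < q) :
    ∫⁻ x : V3, (⨆ t ∈ Icc (1 : ℝ) (lam ^ 2),
      ENNReal.ofReal ((en (heat v₀ t x)) ^ q)) < ⊤ :=
  rdss_heat_sup_Lq_general lam hlam v₀ hmeas hweakL3 q hq
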